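/- Gärtner–Ellis upper bound with general speed: let {R(t)} be real random variables, s_t → ∞ positive, Λ_t(q) = log E[exp(qR(t))], and suppose Λ(q) = lim_{t→∞} Λ_t(s_t q)/s_t exists in [−∞,∞] for each q with 0 in the interior of {q : Λ(q) < ∞}. Then for every closed set C ⊆ ℝ, limsup_{t→∞} (1/s_t) log P(R(t) ∈ C) ≤ −inf_{x∈C} Λ*(x), where Λ*(x) = sup_q (qx − Λ(q)). -/

import Mathlib

/-!
By the exponential Chebyshev inequality, `Λ(q) < z - a` forces `P(q R(t) ≥ z) ≤ exp (-a s_t)`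
for large `t`, because then `Λ_t(s_t q) < (z - a) s_t`. If `Λ*(x) > b > a`, some `q` has
`q x - Λ(q) > b`, and the half-line `{y | q x - (b - a) ≤ q y}` is a neighbourhood of `x` on which
this bound holds. Finiteness of `Λ` at `±q` for small `q > 0` gives the same bound for both tails
outside a compact interval, and a finite subcover of the compact part of `C` then bounds
`P(R(t) ∈ C)` by a constant times `exp (-a s_t)` for every `a < inf_C Λ*`.
-/

open MeasureTheory Filter Topology
open scoped ENNReal

/-- The cumulant `Λ_t(q) = log E[exp(q R(t))]`, as an extended real
(`+∞` when the moment generating function is infinite, `-∞` when it vanishes). -/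
noncomputable def cumulantFn {Ω : Type*} [MeasurableSpace Ω] (μ : Measure Ω)
    (R : ℝ → Ω → ℝ) (t q : ℝ) : EReal :=
  ENNReal.log (∫⁻ ω, ENNReal.ofReal (Real.exp (q * R t ω)) ∂μ)

def DecaysAtRate {ι : Type*} (l : Filter ι) (s : ι → ℝ) (a : ℝ) (m : ι → ℝ≥0∞) : Prop :=
  ∃ c : ℝ, ∀ᶠ i in l, m i ≤ ENNReal.ofReal (Real.exp (c - a * s i))

namespace DecaysAtRate

variable {ι : Type*} {l : Filter ι} {s : ι → ℝ} {a : ℝ} {m m' : ι → ℝ≥0∞}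

lemma zero : DecaysAtRate l s a 0 := ⟨0, .of_forall fun _ => by simp⟩

lemma mono (h : DecaysAtRate l s a m) (hle : ∀ᶠ i in l, m' i ≤ m i) :
    DecaysAtRate l s a m' := by
  obtain ⟨c, hc⟩ := h
  exact ⟨c, (hle.and hc).mono fun _ h => h.1.trans h.2⟩

lemma add (h : DecaysAtRate l s a m) (h' : DecaysAtRate l s a m') :
    DecaysAtRate l s a (m + m') := by
  obtain ⟨c, hc⟩ := h
  obtain ⟨c', hc'⟩ := h'
  refine ⟨max c c' + 1, ?_⟩
  filter_upwards [hc, hc'] with i hi hi'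
  set e := Real.exp (max c c' - a * s i)
  have hc_le : Real.exp (c - a * s i) ≤ e :=
    Real.exp_le_exp.2 (sub_le_sub_right (le_max_left c c') _)
  have hc'_le : Real.exp (c' - a * s i) ≤ e :=
    Real.exp_le_exp.2 (sub_le_sub_right (le_max_right c c') _)
  have htwo : 2 * e ≤ Real.exp (max c c' + 1 - a * s i) := by
    rw [show max c c' + 1 - a * s i = 1 + (max c c' - a * s i) by ring, Real.exp_add]
    gcongr
    linarith [Real.add_one_le_exp 1]
  calc m i + m' i
      ≤ ENNReal.ofReal (Real.exp (c - a * s i)) + ENNReal.ofReal (Real.exp (c' - a * s i)) :=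
        add_le_add hi hi'
    _ ≤ ENNReal.ofReal (2 * e) := by
        rw [two_mul, ENNReal.ofReal_add (by positivity) (by positivity)]
        gcongr
    _ ≤ ENNReal.ofReal (Real.exp (max c c' + 1 - a * s i)) := ENNReal.ofReal_le_ofReal htwo

lemma finset_sum {κ : Type*} {τ : Finset κ} {f : κ → ι → ℝ≥0∞}
    (h : ∀ k ∈ τ, DecaysAtRate l s a (f k)) : DecaysAtRate l s a (∑ k ∈ τ, f k) :=
  Finset.sum_induction f (DecaysAtRate l s a) (fun _ _ => add) zero h

lemma limsup_log_div_le [l.NeBot] (hs : Tendsto s l atTop) (hspos : ∀ i, 0 < s i)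
    (h : DecaysAtRate l s a m) :
    limsup (fun i => ENNReal.log (m i) / (s i : EReal)) l ≤ -(a : EReal) := by
  obtain ⟨c, hc⟩ := h
  have hbound : ∀ᶠ i in l, ENNReal.log (m i) / (s i : EReal) ≤ ((c / s i - a : ℝ) : EReal) := by
    filter_upwards [hc] with i hi
    have hlog : ENNReal.log (m i) ≤ ((c - a * s i : ℝ) : EReal) := by
      simpa [ENNReal.log_ofReal_of_pos (Real.exp_pos _)] using ENNReal.log_monotone hi
    calc ENNReal.log (m i) / (s i : EReal)
        ≤ ((c - a * s i : ℝ) : EReal) / (s i : EReal) :=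
          EReal.div_le_div_right_of_nonneg (by exact_mod_cast (hspos i).le) hlog
      _ = ((c / s i - a : ℝ) : EReal) := by
          rw [← EReal.coe_div, sub_div, mul_div_cancel_right₀ _ (hspos i).ne']
  have hlim : Tendsto (fun i => ((c / s i - a : ℝ) : EReal)) l (𝓝 ((-a : ℝ) : EReal)) := by
    refine EReal.tendsto_coe.2 ?_
    simpa using (tendsto_const_nhds.div_atTop hs).sub_const a
  calc limsup (fun i => ENNReal.log (m i) / (s i : EReal)) l
      ≤ limsup (fun i => ((c / s i - a : ℝ) : EReal)) l := limsup_le_limsup hbound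
    _ = -(a : EReal) := hlim.limsup_eq

end DecaysAtRate

lemma IsCompact.decaysAtRate_measure_preimage {α Ω ι : Type*} [TopologicalSpace α]
    [MeasurableSpace Ω] {μ : Measure Ω} {l : Filter ι} {s : ι → ℝ} {a : ℝ} {K : Set α}
    (hK : IsCompact K) {X : ι → Ω → α}
    (hloc : ∀ x ∈ K, ∃ U ∈ 𝓝 x, DecaysAtRate l s a fun i => μ (X i ⁻¹' U)) :
    DecaysAtRate l s a fun i => μ (X i ⁻¹' K) := by
  choose! U hU hdecay using hloc
  obtain ⟨τ, hτK, hKτ⟩ := hK.elim_nhds_subcover U hU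
  refine (DecaysAtRate.finset_sum fun x hx => hdecay x (hτK x hx)).mono (.of_forall fun i => ?_)
  calc μ (X i ⁻¹' K) ≤ μ (⋃ x ∈ τ, X i ⁻¹' U x) := by
        refine measure_mono ?_
        simpa only [Set.preimage_iUnion₂] using Set.preimage_mono hKτ
    _ ≤ ∑ x ∈ τ, μ (X i ⁻¹' U x) := measure_biUnion_finset_le _ _
    _ = (∑ x ∈ τ, fun i => μ (X i ⁻¹' U x)) i := by rw [Finset.sum_apply]

lemma add_log_measure_le_log_lintegral_exp {Ω : Type*} [MeasurableSpace Ω] {μ : Measure Ω}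
    {X : Ω → ℝ} (hX : AEMeasurable X μ) (c : ℝ) :
    (c : EReal) + ENNReal.log (μ {ω | c ≤ X ω})
      ≤ ENNReal.log (∫⁻ ω, ENNReal.ofReal (Real.exp (X ω)) ∂μ) := by
  have hmarkov := mul_meas_ge_le_lintegral₀ (f := fun ω => ENNReal.ofReal (Real.exp (X ω)))
    (Real.measurable_exp.comp_aemeasurable hX).ennreal_ofReal (ENNReal.ofReal (Real.exp c))
  have hset : {ω | ENNReal.ofReal (Real.exp c) ≤ ENNReal.ofReal (Real.exp (X ω))}
      = {ω | c ≤ X ω} := by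
    ext ω
    simp [ENNReal.ofReal_le_ofReal_iff (Real.exp_pos _).le]
  have hlog := ENNReal.log_monotone hmarkov
  rwa [hset, ENNReal.log_mul_add, ENNReal.log_ofReal_of_pos (Real.exp_pos _),
    Real.log_exp] at hlog

noncomputable def legendreTransform (Λ : ℝ → EReal) (x : ℝ) : EReal :=
  ⨆ q : ℝ, ((q * x : ℝ) : EReal) - Λ q

section GartnerEllis

variable {Ω : Type*} [MeasurableSpace Ω] {μ : Measure Ω} {R : ℝ → Ω → ℝ} {s : ℝ → ℝ}
  {Λ : ℝ → EReal}

lemma decaysAtRate_tail_of_lt (hmeas : ∀ t, Measurable (R t)) (hspos : ∀ t, 0 < s t)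
    (hΛ : ∀ q : ℝ, Tendsto (fun t : ℝ => cumulantFn μ R t (s t * q) / (s t : EReal))
      atTop (𝓝 (Λ q)))
    {q z a : ℝ} (h : Λ q < ((z - a : ℝ) : EReal)) :
    DecaysAtRate atTop s a fun t => μ {ω | z ≤ q * R t ω} := by
  refine ⟨0, ?_⟩
  filter_upwards [(hΛ q).eventually_lt_const h] with t ht
  have hcum : cumulantFn μ R t (s t * q) < (((z - a) * s t : ℝ) : EReal) := by
    rw [EReal.coe_mul]
    exact (EReal.div_lt_iff (by exact_mod_cast hspos t) (EReal.coe_ne_top _)).1 ht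
  have hset : {ω | s t * z ≤ s t * q * R t ω} = {ω | z ≤ q * R t ω} := by
    ext ω
    simp only [Set.mem_ofPred_eq, mul_assoc, mul_le_mul_iff_right₀ (hspos t)]
  have hcheb := add_log_measure_le_log_lintegral_exp (μ := μ)
    ((hmeas t).const_mul (s t * q)).aemeasurable (s t * z)
  rw [hset] at hcheb
  have hlog : ENNReal.log (μ {ω | z ≤ q * R t ω}) ≤ ((0 - a * s t : ℝ) : EReal) := by
    have hsplit : (z - a) * s t = s t * z + (0 - a * s t) := by ring
    rw [← (EReal.addLECancellable_coe (s t * z)).add_le_add_iff_left, ← EReal.coe_add,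
      ← hsplit]
    exact hcheb.trans hcum.le
  calc μ {ω | z ≤ q * R t ω} = EReal.exp (ENNReal.log (μ {ω | z ≤ q * R t ω})) :=
        (ENNReal.exp_log _).symm
    _ ≤ EReal.exp ((0 - a * s t : ℝ) : EReal) := EReal.exp_monotone hlog
    _ = ENNReal.ofReal (Real.exp (0 - a * s t)) := EReal.exp_coe _

lemma exists_decaysAtRate_compl_Icc (hmeas : ∀ t, Measurable (R t)) (hspos : ∀ t, 0 < s t)
    (hΛ : ∀ q : ℝ, Tendsto (fun t : ℝ => cumulantFn μ R t (s t * q) / (s t : EReal))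
      atTop (𝓝 (Λ q)))
    (h0 : (0:ℝ) ∈ interior {q : ℝ | Λ q < ⊤}) (a : ℝ) :
    ∃ lo hi : ℝ, DecaysAtRate atTop s a fun t => μ (R t ⁻¹' (Set.Icc lo hi)ᶜ) := by
  obtain ⟨ε, hε, hball⟩ := Metric.mem_nhds_iff.1 (mem_interior_iff_mem_nhds.1 h0)
  have hfin : ∀ q, |q| < ε → Λ q < ⊤ := fun q hq => hball (by simpa [Real.dist_eq] using hq)
  set q := ε / 2
  have hq : 0 < q := by positivity
  have hqε : q < ε := half_lt_self hε
  obtain ⟨r, hr, -⟩ := EReal.exists_between_coe_real (hfin q (by rwa [abs_of_pos hq]))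
  obtain ⟨r', hr', -⟩ := EReal.exists_between_coe_real
    (hfin (-q) (by rwa [abs_neg, abs_of_pos hq]))
  have hupper := decaysAtRate_tail_of_lt hmeas hspos hΛ (z := r + a) (a := a)
    (hr.trans_eq (by simp))
  have hlower := decaysAtRate_tail_of_lt hmeas hspos hΛ (z := r' + a) (a := a)
    (hr'.trans_eq (by simp))
  refine ⟨-(r' + a) / q, (r + a) / q, (hupper.add hlower).mono (.of_forall fun t => ?_)⟩
  refine (measure_mono fun ω hω => ?_).trans (measure_union_le _ _)
  simp only [Set.mem_preimage, Set.mem_compl_iff, Set.mem_Icc, not_and_or, not_le] at hω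
  rcases hω with hlo | hhi
  · right
    have := (lt_div_iff₀ hq).1 hlo
    change r' + a ≤ -q * R t ω
    linarith
  · left
    have := (div_lt_iff₀ hq).1 hhi
    change r + a ≤ q * R t ω
    linarith

lemma exists_mem_nhds_decaysAtRate (hmeas : ∀ t, Measurable (R t)) (hspos : ∀ t, 0 < s t)
    (hΛ : ∀ q : ℝ, Tendsto (fun t : ℝ => cumulantFn μ R t (s t * q) / (s t : EReal))
      atTop (𝓝 (Λ q)))
    {x a b : ℝ} (hab : a < b) (hb : (b : EReal) < legendreTransform Λ x) :
    ∃ U ∈ 𝓝 x, DecaysAtRate atTop s a fun t => μ (R t ⁻¹' U) := by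
  obtain ⟨q, hq⟩ := lt_iSup_iff.1 hb
  have hΛq : Λ q < ((q * x - (b - a) - a : ℝ) : EReal) := by
    rw [show q * x - (b - a) - a = q * x - b by ring, EReal.coe_sub,
      EReal.lt_sub_iff_add_lt (.inl (EReal.coe_ne_bot b)) (.inl (EReal.coe_ne_top b)), add_comm,
      ← EReal.lt_sub_iff_add_lt (.inr (EReal.coe_ne_top b)) (.inr (EReal.coe_ne_bot b))]
    exact hq
  refine ⟨{y | q * x - (b - a) ≤ q * y}, ?_, decaysAtRate_tail_of_lt hmeas hspos hΛ hΛq⟩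
  exact ((continuous_const_mul q).tendsto x).eventually (eventually_ge_nhds (by linarith))

lemma IsClosed.decaysAtRate_of_lt_iInf_legendreTransform (hmeas : ∀ t, Measurable (R t))
    (hspos : ∀ t, 0 < s t)
    (hΛ : ∀ q : ℝ, Tendsto (fun t : ℝ => cumulantFn μ R t (s t * q) / (s t : EReal))
      atTop (𝓝 (Λ q)))
    (h0 : (0:ℝ) ∈ interior {q : ℝ | Λ q < ⊤}) {C : Set ℝ} (hC : IsClosed C) {a : ℝ}
    (ha : (a : EReal) < ⨅ x ∈ C, legendreTransform Λ x) :
    DecaysAtRate atTop s a fun t => μ (R t ⁻¹' C) := by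
  obtain ⟨b, hab, hbC⟩ := EReal.exists_between_coe_real ha
  obtain ⟨lo, hi, htail⟩ := exists_decaysAtRate_compl_Icc hmeas hspos hΛ h0 a
  have hbounded : DecaysAtRate atTop s a fun t => μ (R t ⁻¹' (C ∩ Set.Icc lo hi)) :=
    (isCompact_Icc.inter_left hC).decaysAtRate_measure_preimage fun x hx =>
      exists_mem_nhds_decaysAtRate hmeas hspos hΛ (by exact_mod_cast hab)
        (hbC.trans_le (iInf₂_le x hx.1))
  refine (hbounded.add htail).mono (.of_forall fun t => ?_)
  refine (measure_mono fun ω hω => ?_).trans (measure_union_le _ _)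
  by_cases hω' : R t ω ∈ Set.Icc lo hi
  exacts [Or.inl ⟨hω, hω'⟩, Or.inr hω']

end GartnerEllis

theorem gartner_ellis_upper_bound_general {Ω : Type*} [MeasurableSpace Ω]
    (μ : Measure Ω) (R : ℝ → Ω → ℝ)
    (hmeas : ∀ t, Measurable (R t))
    (s : ℝ → ℝ) (hs : Tendsto s atTop atTop) (hspos : ∀ t, 0 < s t)
    (Λ : ℝ → EReal)
    (hΛ : ∀ q : ℝ, Tendsto (fun t : ℝ => cumulantFn μ R t (s t * q) / (s t : EReal))
      atTop (𝓝 (Λ q)))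
    (h0 : (0:ℝ) ∈ interior {q : ℝ | Λ q < ⊤}) :
    ∀ C : Set ℝ, IsClosed C →
      Filter.limsup (fun t : ℝ => ENNReal.log (μ {ω | R t ω ∈ C}) / (s t : EReal)) atTop
        ≤ -(⨅ x ∈ C, ⨆ q : ℝ, ((q * x : ℝ) : EReal) - Λ q) := by
  intro C hC
  refine EReal.le_neg.2 (EReal.ge_of_forall_gt_iff_ge.1 fun a ha => EReal.le_neg.1 ?_)
  exact (hC.decaysAtRate_of_lt_iInf_legendreTransform hmeas hspos hΛ h0 ha).limsup_log_div_le
    hs hspos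

/-- Gärtner–Ellis upper bound with general speed: if
`Λ(q) = lim Λ_t(s_t q)/s_t` exists for each `q` and `0` is interior to
`{q : Λ(q) < ∞}`, then for every closed `C`,
`limsup (1/s_t) log P(R(t) ∈ C) ≤ −inf_{x∈C} Λ*(x)`. -/
theorem gartner_ellis_upper_bound {Ω : Type*} [MeasurableSpace Ω]
    (μ : Measure Ω) [IsProbabilityMeasure μ] (R : ℝ → Ω → ℝ)
    (hmeas : ∀ t, Measurable (R t))
    (s : ℝ → ℝ) (hs : Tendsto s atTop atTop) (hspos : ∀ t, 0 < s t)
    (Λ : ℝ → EReal)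
    (hΛ : ∀ q : ℝ, Tendsto (fun t : ℝ => cumulantFn μ R t (s t * q) / (s t : EReal))
      atTop (𝓝 (Λ q)))
    (h0 : (0:ℝ) ∈ interior {q : ℝ | Λ q < ⊤}) :
    ∀ C : Set ℝ, IsClosed C →
      Filter.limsup (fun t : ℝ => ENNReal.log (μ {ω | R t ω ∈ C}) / (s t : EReal)) atTop
        ≤ -(⨅ x ∈ C, ⨆ q : ℝ, ((q * x : ℝ) : EReal) - Λ q) :=
  gartner_ellis_upper_bound_general μ R hmeas s hs hspos Λ hΛ h0
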